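/- Assume each D_k is integrable with respect to π_{k-1}. Then log Z_K ≥ −∑_{k=1}^K ∫ D_k dπ_{k-1}, i.e. the negated CRAFT training objective is a lower bound on the log-normalizing constant of the target. -/

import Mathlib

/-!
With the incremental weight `w_k x = γ_k (T_k x) |det DT_k x| / γ_{k-1} x = exp (-D_k x)`, the
change of variables `y = T_k x` gives `∫ w_k dπ_{k-1} = Z_k / Z_{k-1}`. Jensen's inequality for
the concave logarithm then bounds `-∫ D_k dπ_{k-1} = ∫ log w_k dπ_{k-1}` by
`log Z_k - log Z_{k-1}`, and these bounds telescope to `log Z_K - log Z_0 = log Z_K`.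
-/

open MeasureTheory

lemma Finset.sum_Icc_one_sub_pred {G : Type*} [AddCommGroup G] (f : ℕ → G) (n : ℕ) :
    ∑ k ∈ Finset.Icc 1 n, (f k - f (k - 1)) = f n - f 0 := by
  induction n with
  | zero => simp
  | succ n ih =>
    rw [Finset.sum_Icc_succ_top (Nat.le_add_left 1 n), ih, Nat.add_sub_cancel]
    abel

section Probability

open Real

variable {α : Type*} [MeasurableSpace α] {μ : Measure α}

lemma integral_pos_of_forall_pos [NeZero μ] {f : α → ℝ} (hf : ∀ x, 0 < f x)
    (hfi : Integrable f μ) : 0 < ∫ x, f x ∂μ := by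
  rw [integral_pos_iff_support_of_nonneg (fun x => (hf x).le) hfi,
    Function.support_eq_univ fun x => (hf x).ne']
  exact Measure.measure_univ_pos.mpr (NeZero.ne μ)

lemma integral_log_le_log_integral [IsProbabilityMeasure μ] {g : α → ℝ} (hg : ∀ x, 0 < g x)
    (hgi : Integrable g μ) (hlog : Integrable (fun x => log (g x)) μ) :
    ∫ x, log (g x) ∂μ ≤ log (∫ x, g x ∂μ) := by
  set I := ∫ x, g x ∂μ
  have hI : 0 < I := integral_pos_of_forall_pos hg hgi
  -- the tangent line of `log` at `I`
  have tangent : ∀ x, log (g x) ≤ log I + (g x / I - 1) := fun x => by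
    have := log_le_sub_one_of_pos (div_pos (hg x) hI)
    rw [log_div (hg x).ne' hI.ne'] at this
    linarith
  have hgi' : Integrable (fun x => g x / I - 1) μ := (hgi.div_const I).sub (integrable_const 1)
  calc ∫ x, log (g x) ∂μ ≤ ∫ x, (log I + (g x / I - 1)) ∂μ :=
        integral_mono hlog ((integrable_const _).add hgi') tangent
    _ = log I := by
        rw [integral_add (integrable_const _) hgi',
          integral_sub (hgi.div_const I) (integrable_const 1), integral_div, div_self hI.ne']
        simp

lemma integral_withDensity_ofReal {ρ : α → ℝ} (hρ : Measurable ρ) (hρ_nonneg : ∀ x, 0 ≤ ρ x)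
    (g : α → ℝ) :
    ∫ x, g x ∂μ.withDensity (fun x => ENNReal.ofReal (ρ x)) = ∫ x, ρ x * g x ∂μ := by
  rw [integral_withDensity_eq_integral_toReal_smul hρ.ennreal_ofReal
    (ae_of_all _ fun _ => ENNReal.ofReal_lt_top)]
  simp only [ENNReal.toReal_ofReal (hρ_nonneg _), smul_eq_mul]

lemma integrable_withDensity_ofReal_iff {ρ : α → ℝ} (hρ : Measurable ρ)
    (hρ_nonneg : ∀ x, 0 ≤ ρ x) {g : α → ℝ} :
    Integrable g (μ.withDensity fun x => ENNReal.ofReal (ρ x)) ↔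
      Integrable (fun x => ρ x * g x) μ := by
  rw [integrable_withDensity_iff hρ.ennreal_ofReal (ae_of_all _ fun _ => ENNReal.ofReal_lt_top)]
  simp only [ENNReal.toReal_ofReal (hρ_nonneg _), mul_comm]

noncomputable def MeasureTheory.Measure.withNormalizedDensity (μ : Measure α) (f : α → ℝ) :
    Measure α :=
  μ.withDensity fun x => ENNReal.ofReal (f x / ∫ y, f y ∂μ)

lemma isProbabilityMeasure_withNormalizedDensity {f : α → ℝ} (hf : ∀ x, 0 ≤ f x)
    (hfi : Integrable f μ) (hf_pos : 0 < ∫ x, f x ∂μ) :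
    IsProbabilityMeasure (μ.withNormalizedDensity f) := by
  constructor
  rw [Measure.withNormalizedDensity, withDensity_apply _ MeasurableSet.univ, Measure.restrict_univ,
    ← ofReal_integral_eq_lintegral_ofReal (hfi.div_const _)
      (ae_of_all _ fun x => div_nonneg (hf x) hf_pos.le),
    integral_div, div_self hf_pos.ne', ENNReal.ofReal_one]

end Probability

section ChangeOfVariables

variable {E F : Type*} [NormedAddCommGroup E] [NormedSpace ℝ E] [FiniteDimensional ℝ E]
  [MeasurableSpace E] [BorelSpace E] (μ : Measure E) [μ.IsAddHaarMeasure]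
  [NormedAddCommGroup F] [NormedSpace ℝ F]
  {T : E → E} {T' : E → E →L[ℝ] E}

lemma integral_abs_det_fderiv_smul_comp (hT' : ∀ x, HasFDerivAt T (T' x) x)
    (hT : Function.Bijective T) (f : E → F) :
    ∫ x, |(T' x).det| • f (T x) ∂μ = ∫ x, f x ∂μ := by
  have := integral_image_eq_integral_abs_det_fderiv_smul μ MeasurableSet.univ
    (fun x _ => (hT' x).hasFDerivWithinAt) hT.injective.injOn f
  simpa only [Set.image_univ, hT.surjective.range_eq, Measure.restrict_univ, eq_comm] using this

lemma integrable_abs_det_fderiv_smul_comp_iff (hT' : ∀ x, HasFDerivAt T (T' x) x)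
    (hT : Function.Bijective T) {f : E → F} :
    Integrable (fun x => |(T' x).det| • f (T x)) μ ↔ Integrable f μ := by
  have := integrableOn_image_iff_integrableOn_abs_det_fderiv_smul μ MeasurableSet.univ
    (fun x _ => (hT' x).hasFDerivWithinAt) hT.injective.injOn f
  rwa [Set.image_univ, hT.surjective.range_eq, integrableOn_univ, integrableOn_univ,
    iff_comm] at this

end ChangeOfVariables

lemma det_fderiv_ne_zero_of_leftInverse {𝕜 E : Type*} [NontriviallyNormedField 𝕜]
    [NormedAddCommGroup E] [NormedSpace 𝕜 E] {T S : E → E} {x : E}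
    (hT : DifferentiableAt 𝕜 T x) (hS : DifferentiableAt 𝕜 S (T x))
    (hST : Function.LeftInverse S T) : (fderiv 𝕜 T x).det ≠ 0 := by
  have hcomp : (fderiv 𝕜 S (T x)).comp (fderiv 𝕜 T x) = ContinuousLinearMap.id 𝕜 E := by
    rw [← fderiv_comp x hS hT, show S ∘ T = id from funext hST, fderiv_id]
  have := congrArg (fun L : E →L[𝕜] E => L.det) hcomp
  simp only [ContinuousLinearMap.det, ContinuousLinearMap.coe_id, LinearMap.det_id] at this
  exact right_ne_zero_of_mul_eq_one ((LinearMap.det_comp _ _).symm.trans this)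

section Transport

open Real

variable {E : Type*} [NormedAddCommGroup E] [NormedSpace ℝ E] [FiniteDimensional ℝ E]
  [MeasurableSpace E] [BorelSpace E] (μ : Measure E) [μ.IsAddHaarMeasure]
  {p q : E → ℝ} {T : E → E} {T' : E → E →L[ℝ] E}

/-- The integrand `D_k` of the CRAFT objective for `p = γ_{k-1}`, `q = γ_k`, `T = T_k`, with `T'`
in place of the derivative of `T`. -/
noncomputable def transportLoss (p q : E → ℝ) (T : E → E) (T' : E → E →L[ℝ] E) (x : E) : ℝ :=
  log (p x / q (T x)) - log |(T' x).det|

lemma neg_integral_transportLoss_le (hp : ∀ x, 0 < p x) (hq : ∀ x, 0 < q x)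
    (hp_meas : Measurable p) (hpi : Integrable p μ) (hqi : Integrable q μ)
    (hT' : ∀ x, HasFDerivAt T (T' x) x) (hT : Function.Bijective T)
    (hdet : ∀ x, (T' x).det ≠ 0)
    (hloss : Integrable (transportLoss p q T T') (μ.withNormalizedDensity p)) :
    -∫ x, transportLoss p q T T' x ∂μ.withNormalizedDensity p ≤
      log (∫ x, q x ∂μ) - log (∫ x, p x ∂μ) := by
  set Zp := ∫ x, p x ∂μ
  have hZp : 0 < Zp := integral_pos_of_forall_pos hp hpi
  have hZq : 0 < ∫ x, q x ∂μ := integral_pos_of_forall_pos hq hqi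
  have hprob := isProbabilityMeasure_withNormalizedDensity (fun x => (hp x).le) hpi hZp
  set w : E → ℝ := fun x => |(T' x).det| * q (T x) / p x
  have hw_pos : ∀ x, 0 < w x := fun x =>
    div_pos (mul_pos (abs_pos.mpr (hdet x)) (hq (T x))) (hp x)
  have hlog_w : ∀ x, log (w x) = -transportLoss p q T T' x := fun x => by
    rw [transportLoss, log_div (mul_pos (abs_pos.mpr (hdet x)) (hq (T x))).ne' (hp x).ne',
      log_mul (abs_pos.mpr (hdet x)).ne' (hq (T x)).ne', log_div (hp x).ne' (hq (T x)).ne']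
    ring
  have hdens_meas : Measurable fun x => p x / Zp := hp_meas.div_const Zp
  have hdens_nonneg : ∀ x, 0 ≤ p x / Zp := fun x => div_nonneg (hp x).le hZp.le
  have hdens_w : (fun x => p x / Zp * w x) = fun x => |(T' x).det| • q (T x) / Zp := by
    funext x
    have := (hp x).ne'
    simp only [w, smul_eq_mul]
    field_simp
  have hwi : Integrable w (μ.withNormalizedDensity p) := by
    rw [Measure.withNormalizedDensity, integrable_withDensity_ofReal_iff hdens_meas hdens_nonneg, hdens_w]
    exact ((integrable_abs_det_fderiv_smul_comp_iff μ hT' hT).mpr hqi).div_const Zp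
  have hw_integral : ∫ x, w x ∂μ.withNormalizedDensity p = (∫ x, q x ∂μ) / Zp := by
    rw [Measure.withNormalizedDensity, integral_withDensity_ofReal hdens_meas hdens_nonneg, hdens_w,
      integral_div, integral_abs_det_fderiv_smul_comp μ hT' hT]
  calc -∫ x, transportLoss p q T T' x ∂μ.withNormalizedDensity p
      = ∫ x, log (w x) ∂μ.withNormalizedDensity p := by simp only [hlog_w, integral_neg]
    _ ≤ log (∫ x, w x ∂μ.withNormalizedDensity p) :=
        integral_log_le_log_integral hw_pos hwi (by simpa only [hlog_w] using hloss.fun_neg)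
    _ = log (∫ x, q x ∂μ) - log Zp := by rw [hw_integral, log_div hZq.ne' hZp.ne']

end Transport

/-- the negated CRAFT training objective lower bounds the
log-normalizing constant: `log Z_K ≥ −∑_{k=1}^K ∫ D_k dπ_{k-1}`. -/
theorem craft_objective_lower_bounds_log_Z
    (M K : ℕ)
    (γ : ℕ → (Fin M → ℝ) → ℝ)
    (hγ_pos : ∀ k, k ≤ K → ∀ x, 0 < γ k x)
    (hγ_meas : ∀ k, k ≤ K → Measurable (γ k))
    (hγ_int : ∀ k, k ≤ K → Integrable (γ k))
    (Z : ℕ → ℝ)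
    (hZ : ∀ k, k ≤ K → Z k = ∫ x, γ k x)
    (hZ0 : Z 0 = 1)
    (π : ℕ → Measure (Fin M → ℝ))
    (hπ : ∀ k, k ≤ K →
      π k = volume.withDensity (fun x => ENNReal.ofReal (γ k x / Z k)))
    (T Tinv : ℕ → (Fin M → ℝ) → (Fin M → ℝ))
    (hT : ∀ k, 1 ≤ k → k ≤ K → ContDiff ℝ 1 (T k))
    (hTinv : ∀ k, 1 ≤ k → k ≤ K → ContDiff ℝ 1 (Tinv k))
    (hTleft : ∀ k, 1 ≤ k → k ≤ K → Function.LeftInverse (Tinv k) (T k))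
    (hTright : ∀ k, 1 ≤ k → k ≤ K → Function.RightInverse (Tinv k) (T k))
    (D : ℕ → (Fin M → ℝ) → ℝ)
    (hD : ∀ k, 1 ≤ k → k ≤ K → ∀ x,
      D k x = Real.log (γ (k - 1) x / γ k (T k x))
                - Real.log |(fderiv ℝ (T k) x).det|)
    (hD_int : ∀ k, 1 ≤ k → k ≤ K → Integrable (D k) (π (k - 1))) :
    Real.log (Z K) ≥ -∑ k ∈ Finset.Icc 1 K, ∫ x, D k x ∂(π (k - 1)) := by
  have step : ∀ k ∈ Finset.Icc 1 K,
      -∫ x, D k x ∂(π (k - 1)) ≤ Real.log (Z k) - Real.log (Z (k - 1)) := by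
    intro k hk
    obtain ⟨hk1, hkK⟩ := Finset.mem_Icc.mp hk
    have hk' : k - 1 ≤ K := by omega
    have hT_diff := (hT k hk1 hkK).differentiable one_ne_zero
    have hTinv_diff := (hTinv k hk1 hkK).differentiable one_ne_zero
    have hDk : D k = transportLoss (γ (k - 1)) (γ k) (T k) (fderiv ℝ (T k)) :=
      funext (hD k hk1 hkK)
    have hπk : π (k - 1) = volume.withNormalizedDensity (γ (k - 1)) := by
      rw [hπ _ hk', hZ _ hk', Measure.withNormalizedDensity]
    have hloss := hD_int k hk1 hkK
    rw [hDk, hπk] at hloss ⊢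
    rw [hZ k hkK, hZ _ hk']
    exact neg_integral_transportLoss_le volume (hγ_pos _ hk') (hγ_pos k hkK) (hγ_meas _ hk')
      (hγ_int _ hk') (hγ_int k hkK) (fun x => (hT_diff x).hasFDerivAt)
      ⟨(hTleft k hk1 hkK).injective, (hTright k hk1 hkK).surjective⟩
      (fun x => det_fderiv_ne_zero_of_leftInverse (hT_diff x) (hTinv_diff _) (hTleft k hk1 hkK))
      hloss
  calc Real.log (Z K) = ∑ k ∈ Finset.Icc 1 K, (Real.log (Z k) - Real.log (Z (k - 1))) := by
        rw [Finset.sum_Icc_one_sub_pred, hZ0, Real.log_one, sub_zero]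
    _ ≥ ∑ k ∈ Finset.Icc 1 K, -∫ x, D k x ∂(π (k - 1)) := Finset.sum_le_sum step
    _ = -∑ k ∈ Finset.Icc 1 K, ∫ x, D k x ∂(π (k - 1)) := Finset.sum_neg_distrib _
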